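/- Let θ ∈ (0,π/2), λ ≥ 1, a,b ∈ ℝ, and for δ ≥ 0 let p*_δ(x,y) = λ·(φ(x)φ(y)/Φ(δ))·1_{ℝ₊}(δ − x cos θ − y sin θ)·F₁,δ(x)^{λ−1} be the selected-step density. Then lim_{δ→+∞} ∫∫ exp(ax + by)·p*_δ(x,y) dx dy = E[exp(a·N^{(λ)})]·E[exp(b·N)] < ∞, where N^{(λ)} is the maximum of λ i.i.d. standard normals and N is standard normal. -/

import Mathlib

open MeasureTheory ProbabilityTheory Real Set Filter

noncomputable def phi (x : ℝ) : ℝ := Real.exp (-x^2/2) / Real.sqrt (2*Real.pi)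
noncomputable def Phi (x : ℝ) : ℝ := ∫ u in Set.Iic x, phi u
noncomputable def pdelta (θ δ : ℝ) (z : ℝ × ℝ) : ℝ :=
  phi z.1 * phi z.2 * Set.indicator (Set.Ici (0:ℝ)) (fun _ => 1)
    (δ - z.1 * Real.cos θ - z.2 * Real.sin θ) / Phi δ
noncomputable def p1 (θ δ x : ℝ) : ℝ :=
  phi x * Phi ((δ - x * Real.cos θ) / Real.sin θ) / Phi δ
noncomputable def F1 (θ δ x : ℝ) : ℝ := ∫ u in Set.Iic x, p1 θ δ u
noncomputable def pstar (lam : ℕ) (θ δ : ℝ) (z : ℝ × ℝ) : ℝ :=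
  (lam : ℝ) * pdelta θ δ z * F1 θ δ z.1 ^ (lam - 1)
noncomputable def p1star (lam : ℕ) (θ δ x : ℝ) : ℝ :=
  (lam : ℝ) * p1 θ δ x * F1 θ δ x ^ (lam - 1)
noncomputable def p2star (lam : ℕ) (θ δ y : ℝ) : ℝ :=
  (lam : ℝ) * (phi y / Phi δ) *
    ∫ u in Set.Iic ((δ - y * Real.sin θ) / Real.cos θ), phi u * F1 θ δ u ^ (lam - 1)

open Topology

/-! Dominated convergence. For `δ ≥ 0` we have `Φ(δ) ≥ Φ(0)`, so the integrand is bounded by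
a constant times `exp(a x) φ(x) · exp(b y) φ(y)`. Pointwise, the indicator is eventually `1` and
`F₁,δ → Φ` (again by dominated convergence, since `p₁,δ → φ`), so the integrand tends to
`exp(a x + b y) λ φ(x) φ(y) Φ(x)^(λ-1)`, whose integral factors by Fubini. -/

lemma phi_eq_gaussianPDFReal : phi = gaussianPDFReal 0 1 := by
  ext x
  simp [phi, gaussianPDFReal, div_eq_inv_mul]

lemma phi_pos (x : ℝ) : 0 < phi x :=
  phi_eq_gaussianPDFReal ▸ gaussianPDFReal_pos 0 1 x one_ne_zero

lemma continuous_phi : Continuous phi := by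
  unfold phi; fun_prop

lemma integrable_phi : Integrable phi :=
  phi_eq_gaussianPDFReal ▸ integrable_gaussianPDFReal 0 1

lemma integral_phi : ∫ x, phi x = 1 :=
  phi_eq_gaussianPDFReal ▸ integral_gaussianPDFReal_eq_one 0 one_ne_zero

lemma Phi_eq_cdf : Phi = cdf (gaussianReal 0 1) := by
  ext x
  rw [cdf_eq_real, measureReal_def, gaussianReal_apply_eq_integral _ one_ne_zero,
    ENNReal.toReal_ofReal (setIntegral_nonneg measurableSet_Iic
      fun u _ => gaussianPDFReal_nonneg 0 1 u), ← phi_eq_gaussianPDFReal, Phi]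

lemma Phi_nonneg (x : ℝ) : 0 ≤ Phi x := Phi_eq_cdf ▸ cdf_nonneg _ x

lemma Phi_le_one (x : ℝ) : Phi x ≤ 1 := Phi_eq_cdf ▸ cdf_le_one _ x

lemma monotone_Phi : Monotone Phi := Phi_eq_cdf ▸ monotone_cdf _

lemma tendsto_Phi_atTop : Tendsto Phi atTop (𝓝 1) := Phi_eq_cdf ▸ tendsto_cdf_atTop _

lemma Phi_pos (x : ℝ) : 0 < Phi x := by
  rw [Phi, setIntegral_pos_iff_support_of_nonneg_ae (ae_of_all _ fun u => (phi_pos u).le)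
    integrable_phi.integrableOn, Function.support_eq_univ fun u => (phi_pos u).ne',
    univ_inter]
  simp

lemma exp_mul_mul_phi (a x : ℝ) :
    exp (a * x) * phi x = exp (a ^ 2 / 2) * gaussianPDFReal a 1 x := by
  simp only [phi, gaussianPDFReal, NNReal.coe_one, mul_one, div_eq_inv_mul]
  rw [mul_left_comm, ← exp_add, mul_left_comm, ← exp_add]
  ring_nf

lemma integrable_exp_mul_mul_phi (a : ℝ) : Integrable fun x => exp (a * x) * phi x := by
  simp_rw [exp_mul_mul_phi]
  exact (integrable_gaussianPDFReal a 1).const_mul _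

lemma p1_nonneg (θ δ x : ℝ) : 0 ≤ p1 θ δ x :=
  div_nonneg (mul_nonneg (phi_pos x).le (Phi_nonneg _)) (Phi_nonneg δ)

lemma p1_le (θ δ x : ℝ) : p1 θ δ x ≤ phi x / Phi δ := by
  unfold p1
  gcongr
  · exact Phi_nonneg δ
  · exact mul_le_of_le_one_right (phi_pos x).le (Phi_le_one _)

lemma measurable_p1 (θ δ : ℝ) : Measurable (p1 θ δ) := by
  unfold p1
  exact (continuous_phi.measurable.mul (monotone_Phi.measurable.comp
    ((measurable_const.sub (measurable_id.mul_const _)).div_const _))).div_const _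

lemma integrable_p1 (θ δ : ℝ) : Integrable (p1 θ δ) :=
  (integrable_phi.div_const _).mono' (measurable_p1 θ δ).aestronglyMeasurable
    (ae_of_all _ fun x => (norm_of_nonneg (p1_nonneg θ δ x)).trans_le (p1_le θ δ x))

lemma F1_nonneg (θ δ x : ℝ) : 0 ≤ F1 θ δ x :=
  setIntegral_nonneg measurableSet_Iic fun u _ => p1_nonneg θ δ u

lemma measurable_F1 (θ δ : ℝ) : Measurable (F1 θ δ) :=
  Monotone.measurable fun _ _ h => setIntegral_mono_set (integrable_p1 θ δ).integrableOn
    (ae_of_all _ (p1_nonneg θ δ)) (Iic_subset_Iic.2 h).eventuallyLE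

lemma F1_le (θ δ x : ℝ) : F1 θ δ x ≤ (Phi δ)⁻¹ :=
  calc F1 θ δ x ≤ ∫ u, p1 θ δ u :=
        setIntegral_le_integral (integrable_p1 θ δ) (ae_of_all _ (p1_nonneg θ δ))
    _ ≤ ∫ u, phi u / Phi δ :=
        integral_mono (integrable_p1 θ δ) (integrable_phi.div_const _) (p1_le θ δ)
    _ = (Phi δ)⁻¹ := by rw [integral_div, integral_phi, one_div]

lemma tendsto_p1_atTop {θ : ℝ} (hθ : 0 < sin θ) (x : ℝ) :
    Tendsto (fun δ => p1 θ δ x) atTop (𝓝 (phi x)) := by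
  have hshift : Tendsto (fun δ => (δ - x * cos θ) / sin θ) atTop atTop :=
    (tendsto_atTop_add_const_right _ _ tendsto_id).atTop_div_const hθ
  have h := ((tendsto_Phi_atTop.comp hshift).const_mul (phi x)).div tendsto_Phi_atTop
    one_ne_zero
  rwa [mul_one, div_one] at h

lemma tendsto_F1_atTop {θ : ℝ} (hθ : 0 < sin θ) (x : ℝ) :
    Tendsto (fun δ => F1 θ δ x) atTop (𝓝 (Phi x)) := by
  refine tendsto_integral_filter_of_dominated_convergence (fun u => phi u / Phi 0)
    (Eventually.of_forall fun δ => (measurable_p1 θ δ).aestronglyMeasurable) ?_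
    (integrable_phi.div_const _).integrableOn
    (ae_of_all _ fun u => tendsto_p1_atTop hθ u)
  filter_upwards [eventually_ge_atTop 0] with δ hδ
  refine ae_of_all _ fun u => (norm_of_nonneg (p1_nonneg θ δ u)).trans_le ?_
  exact (p1_le θ δ u).trans (div_le_div_of_nonneg_left (phi_pos u).le (Phi_pos 0)
    (monotone_Phi hδ))

lemma indicator_Ici_one_mem_Icc (t : ℝ) :
    (Ici (0 : ℝ)).indicator (fun _ => (1 : ℝ)) t ∈ Icc 0 1 := by
  by_cases h : t ∈ Ici (0 : ℝ) <;> simp [h]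

lemma pdelta_nonneg (θ δ : ℝ) (z : ℝ × ℝ) : 0 ≤ pdelta θ δ z :=
  div_nonneg (mul_nonneg (mul_nonneg (phi_pos _).le (phi_pos _).le)
    (indicator_Ici_one_mem_Icc _).1) (Phi_nonneg δ)

lemma pdelta_le (θ δ : ℝ) (z : ℝ × ℝ) : pdelta θ δ z ≤ phi z.1 * phi z.2 / Phi δ := by
  exact div_le_div_of_nonneg_right (mul_le_of_le_one_right
    (mul_pos (phi_pos _) (phi_pos _)).le (indicator_Ici_one_mem_Icc _).2) (Phi_nonneg δ)

lemma measurable_pdelta (θ δ : ℝ) : Measurable (pdelta θ δ) := by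
  unfold pdelta
  refine (Measurable.mul ?_ ?_).div_const _
  · exact (continuous_phi.measurable.comp measurable_fst).mul
      (continuous_phi.measurable.comp measurable_snd)
  · exact (measurable_const.indicator measurableSet_Ici).comp
      ((measurable_const.sub (measurable_fst.mul_const _)).sub (measurable_snd.mul_const _))

lemma tendsto_pdelta_atTop (θ : ℝ) (z : ℝ × ℝ) :
    Tendsto (fun δ => pdelta θ δ z) atTop (𝓝 (phi z.1 * phi z.2)) := by
  have h := (tendsto_const_nhds (x := phi z.1 * phi z.2)).div tendsto_Phi_atTop one_ne_zero
  rw [div_one] at h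
  refine h.congr' ?_
  filter_upwards [eventually_ge_atTop (z.1 * cos θ + z.2 * sin θ)] with δ hδ
  rw [pdelta, indicator_of_mem (by rw [mem_Ici]; linarith), mul_one]
  rfl

lemma pstar_nonneg (lam : ℕ) (θ δ : ℝ) (z : ℝ × ℝ) : 0 ≤ pstar lam θ δ z :=
  mul_nonneg (mul_nonneg lam.cast_nonneg (pdelta_nonneg θ δ z)) (pow_nonneg (F1_nonneg θ δ _) _)

lemma pstar_le (lam : ℕ) (θ : ℝ) {δ : ℝ} (hδ : 0 ≤ δ) (z : ℝ × ℝ) :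
    pstar lam θ δ z ≤ lam * (Phi 0)⁻¹ ^ (lam - 1) / Phi 0 * (phi z.1 * phi z.2) := by
  have hinv : (Phi δ)⁻¹ ≤ (Phi 0)⁻¹ := inv_anti₀ (Phi_pos 0) (monotone_Phi hδ)
  have hF1 : F1 θ δ z.1 ^ (lam - 1) ≤ (Phi 0)⁻¹ ^ (lam - 1) :=
    pow_le_pow_left₀ (F1_nonneg θ δ z.1) ((F1_le θ δ z.1).trans hinv) _
  have hpdelta : pdelta θ δ z ≤ phi z.1 * phi z.2 / Phi 0 := by
    refine (pdelta_le θ δ z).trans ?_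
    simp only [div_eq_mul_inv]
    exact mul_le_mul_of_nonneg_left hinv (mul_pos (phi_pos _) (phi_pos _)).le
  calc pstar lam θ δ z ≤ lam * (phi z.1 * phi z.2 / Phi 0) * (Phi 0)⁻¹ ^ (lam - 1) := by
        exact mul_le_mul (mul_le_mul_of_nonneg_left hpdelta lam.cast_nonneg) hF1
          (pow_nonneg (F1_nonneg θ δ z.1) _)
          (mul_nonneg lam.cast_nonneg (div_nonneg (mul_pos (phi_pos _) (phi_pos _)).le
            (Phi_pos 0).le))
    _ = lam * (Phi 0)⁻¹ ^ (lam - 1) / Phi 0 * (phi z.1 * phi z.2) := by ring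

lemma measurable_pstar (lam : ℕ) (θ δ : ℝ) : Measurable (pstar lam θ δ) :=
  (measurable_const.mul (measurable_pdelta θ δ)).mul
    (((measurable_F1 θ δ).comp measurable_fst).pow_const _)

lemma tendsto_pstar_atTop (lam : ℕ) {θ : ℝ} (hθ : 0 < sin θ) (z : ℝ × ℝ) :
    Tendsto (fun δ => pstar lam θ δ z) atTop
      (𝓝 (lam * (phi z.1 * phi z.2) * Phi z.1 ^ (lam - 1))) :=
  ((tendsto_pdelta_atTop θ z).const_mul _).mul ((tendsto_F1_atTop hθ z.1).pow _)

lemma integral_exp_mul_limit_pstar (lam : ℕ) (a b : ℝ) :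
    ∫ z : ℝ × ℝ, exp (a * z.1 + b * z.2) * (lam * (phi z.1 * phi z.2) * Phi z.1 ^ (lam - 1))
      = (∫ x, exp (a * x) * (lam * phi x * Phi x ^ (lam - 1))) * ∫ y, exp (b * y) * phi y := by
  rw [Measure.volume_eq_prod, ← integral_prod_mul]
  congr 1 with z
  rw [exp_add]
  ring

theorem stmt12_general (lam : ℕ) (θ : ℝ)
    (hθ : θ ∈ Set.Ioo 0 (Real.pi/2)) (a b : ℝ) :
    Filter.Tendsto
      (fun δ => ∫ z : ℝ × ℝ, Real.exp (a * z.1 + b * z.2) * pstar lam θ δ z)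
      Filter.atTop
      (nhds ((∫ x : ℝ, Real.exp (a * x) * ((lam : ℝ) * phi x * Phi x ^ (lam - 1)))
        * (∫ y : ℝ, Real.exp (b * y) * phi y))) := by
  have hsin : 0 < sin θ := sin_pos_of_pos_of_lt_pi hθ.1 (by linarith [hθ.2, pi_pos])
  set K : ℝ := lam * (Phi 0)⁻¹ ^ (lam - 1) / Phi 0
  rw [← integral_exp_mul_limit_pstar]
  refine tendsto_integral_filter_of_dominated_convergence
    (fun z => K * (exp (a * z.1) * phi z.1 * (exp (b * z.2) * phi z.2)))
    (Eventually.of_forall fun δ => ((by fun_prop : Continuous fun z : ℝ × ℝ =>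
      exp (a * z.1 + b * z.2)).measurable.mul (measurable_pstar lam θ δ)).aestronglyMeasurable)
    ?_ ?_ (ae_of_all _ fun z => (tendsto_pstar_atTop lam hsin z).const_mul _)
  · filter_upwards [eventually_ge_atTop 0] with δ hδ
    refine ae_of_all _ fun z => ?_
    rw [norm_of_nonneg (mul_nonneg (exp_pos _).le (pstar_nonneg lam θ δ z))]
    calc exp (a * z.1 + b * z.2) * pstar lam θ δ z
        ≤ exp (a * z.1 + b * z.2) * (K * (phi z.1 * phi z.2)) :=
          mul_le_mul_of_nonneg_left (pstar_le lam θ hδ z) (exp_pos _).le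
      _ = K * (exp (a * z.1) * phi z.1 * (exp (b * z.2) * phi z.2)) := by rw [exp_add]; ring
  · rw [Measure.volume_eq_prod]
    exact ((integrable_exp_mul_mul_phi a).mul_prod (integrable_exp_mul_mul_phi b)).const_mul K

/-- the exponential moment of the selected step converges, as
δ → +∞, to E[exp(a N^{(λ)})] · E[exp(b N)], which is finite. -/
theorem stmt12 (lam : ℕ) (hlam : 1 ≤ lam) (θ : ℝ)
    (hθ : θ ∈ Set.Ioo 0 (Real.pi/2)) (a b : ℝ) :
    Filter.Tendsto
      (fun δ => ∫ z : ℝ × ℝ, Real.exp (a * z.1 + b * z.2) * pstar lam θ δ z)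
      Filter.atTop
      (nhds ((∫ x : ℝ, Real.exp (a * x) * ((lam : ℝ) * phi x * Phi x ^ (lam - 1)))
        * (∫ y : ℝ, Real.exp (b * y) * phi y))) :=
  stmt12_general lam θ hθ a b
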